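/- arXiv:1312.7382 — 3 statements merged into one kernel-verified Lean document; each statement's English description precedes it below -/
import Mathlib

section
/- For real numbers a, b with 0 < a < b < 1, the improper integral ∫_b^1 dx / (x(x-a)√((x-b)(1-x))) equals (π/(a(1-a))) · ((a-1)/√b + 1/c), where c = √((b-a)/(1-a)). -/
/-!
The substitution `x = b + (1 - b) / (t ^ 2 + 1)` maps `(0, ∞)` onto `(b, 1)` and turns
`√((x - b) * (1 - x))` into the rational function `(1 - b) * t / (t ^ 2 + 1)`. After it the
integrand becomes `(2 / a) * (1 / ((b - a) * t ^ 2 + (1 - a)) - 1 / (b * t ^ 2 + 1))`, and each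
term is an arctangent integral `∫₀^∞ dt / (p * t ^ 2 + q) = π / (2 * √(p * q))`.
-/

open Real MeasureTheory Set Filter Topology

section QuadraticIntegral

variable {p q : ℝ}

lemma hasDerivAt_arctan_div_sqrt_mul_sqrt (hp : 0 < p) (hq : 0 < q) (t : ℝ) :
    HasDerivAt (fun t => arctan (√p * t / √q) / (√p * √q)) (1 / (p * t ^ 2 + q)) t := by
  have hsp := sq_sqrt hp.le
  have hsq := sq_sqrt hq.le
  have := (((hasDerivAt_id t).const_mul √p).div_const √q).arctan.div_const (√p * √q)
  refine this.congr_deriv ?_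
  have : 0 < √p := sqrt_pos.mpr hp
  have : 0 < √q := sqrt_pos.mpr hq
  field_simp
  simp only [id, hsp, hsq]
  ring

lemma tendsto_arctan_div_sqrt_mul_sqrt (hp : 0 < p) (hq : 0 < q) :
    Tendsto (fun t => arctan (√p * t / √q) / (√p * √q)) atTop (𝓝 (π / (2 * (√p * √q)))) := by
  have hlin : Tendsto (fun t => √p * t / √q) atTop atTop :=
    (tendsto_id.const_mul_atTop (sqrt_pos.mpr hp)).atTop_div_const (sqrt_pos.mpr hq)
  have := ((tendsto_arctan_atTop.mono_right nhdsWithin_le_nhds).comp hlin).div_const (√p * √q)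
  rwa [div_div] at this

lemma integrableOn_Ioi_one_div_mul_sq_add (hp : 0 < p) (hq : 0 < q) :
    IntegrableOn (fun t => 1 / (p * t ^ 2 + q)) (Ioi 0) :=
  integrableOn_Ioi_deriv_of_nonneg'
    (fun t _ => hasDerivAt_arctan_div_sqrt_mul_sqrt hp hq t) (fun t _ => by positivity)
    (tendsto_arctan_div_sqrt_mul_sqrt hp hq)

lemma integral_Ioi_one_div_mul_sq_add (hp : 0 < p) (hq : 0 < q) :
    ∫ t in Ioi 0, 1 / (p * t ^ 2 + q) = π / (2 * (√p * √q)) := by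
  rw [integral_Ioi_of_hasDerivAt_of_nonneg'
    (fun t _ => hasDerivAt_arctan_div_sqrt_mul_sqrt hp hq t) (fun t _ => by positivity)
    (tendsto_arctan_div_sqrt_mul_sqrt hp hq)]
  simp

end QuadraticIntegral

/-- The inverse of the substitution `t = √((d - x) / (x - b))`, which rationalises
`√((x - b) * (d - x))` on `(b, d)`. -/
noncomputable def eulerSubst (b d t : ℝ) : ℝ := b + (d - b) / (t ^ 2 + 1)

section EulerSubst

variable {b d : ℝ}

lemma hasDerivAt_eulerSubst (b d t : ℝ) :
    HasDerivAt (eulerSubst b d) (-((d - b) * (2 * t) / (t ^ 2 + 1) ^ 2)) t := by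
  have hsq : HasDerivAt (fun t : ℝ => t ^ 2 + 1) (2 * t) t := by
    simpa using (hasDerivAt_pow 2 t).add_const 1
  have := ((hasDerivAt_const t (d - b)).div hsq (by positivity)).const_add b
  exact this.congr_deriv (by ring)

lemma strictAntiOn_eulerSubst (hbd : b < d) : StrictAntiOn (eulerSubst b d) (Ici 0) := by
  intro s hs t _ hst
  unfold eulerSubst
  gcongr

lemma eulerSubst_image_Ioi (hbd : b < d) : eulerSubst b d '' Ioi 0 = Ioo b d := by
  ext x
  constructor
  · rintro ⟨t, ht, rfl⟩
    have ht : 0 < t := ht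
    refine ⟨?_, ?_⟩
    · unfold eulerSubst
      have : 0 < (d - b) / (t ^ 2 + 1) := div_pos (by linarith) (by positivity)
      linarith
    · simpa [eulerSubst] using strictAntiOn_eulerSubst hbd self_mem_Ici ht.le ht
  · rintro ⟨hbx, hxd⟩
    have hxb : 0 < x - b := by linarith
    refine ⟨√((d - x) / (x - b)), sqrt_pos.mpr (div_pos (by linarith) hxb), ?_⟩
    rw [eulerSubst, sq_sqrt (div_pos (by linarith) hxb).le]
    field_simp
    ring

lemma sqrt_sub_mul_sub_eulerSubst (hbd : b < d) {t : ℝ} (ht : 0 ≤ t) :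
    √((eulerSubst b d t - b) * (d - eulerSubst b d t)) = (d - b) * t / (t ^ 2 + 1) := by
  have : (eulerSubst b d t - b) * (d - eulerSubst b d t) = ((d - b) * t / (t ^ 2 + 1)) ^ 2 := by
    unfold eulerSubst
    field_simp
    ring
  rw [this, sqrt_sq (div_nonneg (mul_nonneg (by linarith) ht) (by positivity))]

end EulerSubst

section

variable {a b d : ℝ}

lemma abs_deriv_mul_integrand_eulerSubst (ha : a ≠ 0) (hb : 0 < b) (hab : a < b) (hbd : b < d)
    {t : ℝ} (ht : 0 < t) :
    |-((d - b) * (2 * t) / (t ^ 2 + 1) ^ 2)| *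
        (1 / (eulerSubst b d t * (eulerSubst b d t - a) *
          √((eulerSubst b d t - b) * (d - eulerSubst b d t)))) =
      2 / a * (1 / ((b - a) * t ^ 2 + (d - a)) - 1 / (b * t ^ 2 + d)) := by
  have hdb : 0 < d - b := by linarith
  have hx : eulerSubst b d t = (b * t ^ 2 + d) / (t ^ 2 + 1) := by
    unfold eulerSubst; field_simp; ring
  have hxa : eulerSubst b d t - a = ((b - a) * t ^ 2 + (d - a)) / (t ^ 2 + 1) := by
    unfold eulerSubst; field_simp; ring
  have hxd : b * t ^ 2 + d ≠ 0 := by nlinarith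
  rw [abs_neg, abs_of_pos (by positivity), sqrt_sub_mul_sub_eulerSubst hbd ht.le, hxa, hx]
  field_simp
  rw [div_sub_one (by nlinarith)]
  ring

theorem integral_Ioo_one_div_mul_mul_sqrt (ha : a ≠ 0) (hb : 0 < b) (hab : a < b) (hbd : b < d) :
    ∫ x in Ioo b d, 1 / (x * (x - a) * √((x - b) * (d - x))) =
      π / a * (1 / (√(b - a) * √(d - a)) - 1 / (√b * √d)) := by
  have hba : 0 < b - a := by linarith
  have hda : 0 < d - a := by linarith
  have hd : 0 < d := by linarith
  rw [← eulerSubst_image_Ioi hbd, integral_image_eq_integral_abs_deriv_smul measurableSet_Ioi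
    (fun t _ => (hasDerivAt_eulerSubst b d t).hasDerivWithinAt)
    ((strictAntiOn_eulerSubst hbd).injOn.mono Ioi_subset_Ici_self)]
  simp only [smul_eq_mul]
  rw [setIntegral_congr_fun measurableSet_Ioi
      (fun t ht => abs_deriv_mul_integrand_eulerSubst ha hb hab hbd ht),
    integral_const_mul, integral_sub (integrableOn_Ioi_one_div_mul_sq_add hba hda)
      (integrableOn_Ioi_one_div_mul_sq_add hb hd),
    integral_Ioi_one_div_mul_sq_add hba hda, integral_Ioi_one_div_mul_sq_add hb hd]
  field_simp

end

theorem stmt_0 (a b : ℝ) (ha : 0 < a) (hab : a < b) (hb : b < 1)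
    (c : ℝ) (hc : c = Real.sqrt ((b - a) / (1 - a))) :
    ∫ x in Set.Ioo b 1, 1 / (x * (x - a) * Real.sqrt ((x - b) * (1 - x))) =
      Real.pi / (a * (1 - a)) * ((a - 1) / Real.sqrt b + 1 / c) := by
  have h1a : 0 < 1 - a := by linarith
  rw [integral_Ioo_one_div_mul_mul_sqrt ha.ne' (ha.trans hab) hab hb, hc,
    sqrt_div (by linarith), sqrt_one, mul_one]
  rw [show a * (1 - a) = a * √(1 - a) ^ 2 by rw [sq_sqrt h1a.le],
    show a - 1 = -√(1 - a) ^ 2 by rw [sq_sqrt h1a.le]; ring]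
  field_simp
  ring
end

section
/- For λ > 1 and m_λ(t) = cosh t / √(1 + λ sinh² t), the Gaussian curvature G(t) = -m_λ''(t)/m_λ(t) of the warped product metric dt² + m_λ(t)² dθ² equals (λ-1)·(3/h(t)² - 2/h(t)), where h(t) = 1 + λ sinh² t. -/
/-!
With `h = 1 + λ sinh² t` one finds `m' = (1 - λ) sinh t / h^{3/2}` and then
`m'' = (1 - λ) cosh t (h - 3λ sinh² t) / h^{5/2}`. Since `λ sinh² t = h - 1`, the factor
`h - 3λ sinh² t` is `3 - 2h`, and dividing by `m = cosh t / h^{1/2}` gives the curvature.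
-/

open Real

noncomputable def oneAddMulSinhSq (l t : ℝ) : ℝ := 1 + l * sinh t ^ 2

section

variable {l : ℝ}

lemma oneAddMulSinhSq_pos (hl : 0 ≤ l) (t : ℝ) : 0 < oneAddMulSinhSq l t := by
  unfold oneAddMulSinhSq
  positivity

lemma hasDerivAt_oneAddMulSinhSq (l t : ℝ) :
    HasDerivAt (oneAddMulSinhSq l) (2 * l * sinh t * cosh t) t :=
  ((((hasDerivAt_sinh t).pow 2).const_mul l).const_add 1).congr_deriv (by ring)

lemma hasDerivAt_sqrt_oneAddMulSinhSq (hl : 0 ≤ l) (t : ℝ) :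
    HasDerivAt (fun x => √(oneAddMulSinhSq l x))
      (l * sinh t * cosh t / √(oneAddMulSinhSq l t)) t :=
  ((hasDerivAt_oneAddMulSinhSq l t).sqrt (oneAddMulSinhSq_pos hl t).ne').congr_deriv (by ring)

lemma hasDerivAt_cosh_div_sqrt_oneAddMulSinhSq (hl : 0 ≤ l) (t : ℝ) :
    HasDerivAt (fun x => cosh x / √(oneAddMulSinhSq l x))
      ((1 - l) * (sinh t / (oneAddMulSinhSq l t * √(oneAddMulSinhSq l t)))) t := by
  have hpos := oneAddMulSinhSq_pos hl t
  refine ((hasDerivAt_cosh t).div (hasDerivAt_sqrt_oneAddMulSinhSq hl t)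
    (Real.sqrt_pos.mpr hpos).ne').congr_deriv ?_
  have hsq := Real.sq_sqrt hpos.le
  have hcosh := cosh_sq' t
  have hdef : oneAddMulSinhSq l t = 1 + l * sinh t ^ 2 := rfl
  field_simp
  linear_combination sinh t * (oneAddMulSinhSq l t - 1 + l) * hsq
    + sinh t * oneAddMulSinhSq l t * hdef - sinh t * oneAddMulSinhSq l t * l * hcosh

lemma hasDerivAt_oneAddMulSinhSq_mul_sqrt (hl : 0 ≤ l) (t : ℝ) :
    HasDerivAt (fun x => oneAddMulSinhSq l x * √(oneAddMulSinhSq l x))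
      (3 * l * sinh t * cosh t * √(oneAddMulSinhSq l t)) t := by
  have hpos := oneAddMulSinhSq_pos hl t
  refine ((hasDerivAt_oneAddMulSinhSq l t).mul
    (hasDerivAt_sqrt_oneAddMulSinhSq hl t)).congr_deriv ?_
  have hsq := Real.sq_sqrt hpos.le
  field_simp
  linear_combination -(l * sinh t) * hsq

lemma hasDerivAt_sinh_div_oneAddMulSinhSq_mul_sqrt (hl : 0 ≤ l) (t : ℝ) :
    HasDerivAt (fun x => sinh x / (oneAddMulSinhSq l x * √(oneAddMulSinhSq l x)))
      (cosh t * (3 - 2 * oneAddMulSinhSq l t) /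
        (oneAddMulSinhSq l t ^ 2 * √(oneAddMulSinhSq l t))) t := by
  have hpos := oneAddMulSinhSq_pos hl t
  have hsqrt := Real.sqrt_pos.mpr hpos
  refine ((hasDerivAt_sinh t).div (hasDerivAt_oneAddMulSinhSq_mul_sqrt hl t)
    (by positivity)).congr_deriv ?_
  have hdef : oneAddMulSinhSq l t = 1 + l * sinh t ^ 2 := rfl
  field_simp
  linear_combination 3 * hdef

lemma deriv_deriv_cosh_div_sqrt_oneAddMulSinhSq (hl : 0 ≤ l) (t : ℝ) :
    deriv (deriv fun x => cosh x / √(oneAddMulSinhSq l x)) t =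
      (1 - l) * (cosh t * (3 - 2 * oneAddMulSinhSq l t) /
        (oneAddMulSinhSq l t ^ 2 * √(oneAddMulSinhSq l t))) := by
  have hderiv : deriv (fun x => cosh x / √(oneAddMulSinhSq l x)) =
      fun x => (1 - l) * (sinh x / (oneAddMulSinhSq l x * √(oneAddMulSinhSq l x))) :=
    funext fun x => (hasDerivAt_cosh_div_sqrt_oneAddMulSinhSq hl x).deriv
  rw [hderiv]
  exact ((hasDerivAt_sinh_div_oneAddMulSinhSq_mul_sqrt hl t).const_mul (1 - l)).deriv

end

theorem stmt_5 (l : ℝ) (hl : 1 < l)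
    (m h : ℝ → ℝ) (hm : ∀ t, m t = Real.cosh t / Real.sqrt (1 + l * Real.sinh t ^ 2))
    (hh : ∀ t, h t = 1 + l * Real.sinh t ^ 2) (t : ℝ) :
    -(deriv (deriv m) t) / m t = (l - 1) * (3 / h t ^ 2 - 2 / h t) := by
  have hl0 : 0 ≤ l := zero_le_one.trans hl.le
  have hm' : m = fun x => cosh x / √(oneAddMulSinhSq l x) := funext hm
  have hsqrt := Real.sqrt_pos.mpr (oneAddMulSinhSq_pos hl0 t)
  have hh' : h t = oneAddMulSinhSq l t := hh t
  rw [hm', deriv_deriv_cosh_div_sqrt_oneAddMulSinhSq hl0, hh']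
  field_simp [(cosh_pos t).ne']
  ring
end

section
/- For λ > 1 and ν ∈ (1/√λ, 1), the half period function φ(ν) = ν√(λ-1) ∫_{ν²}^1 dx / (x(λx-1)√((x-ν²)(1-x))) equals π·(-√(λ-1) + λν/√(λν²-1)). -/
/-!
Partial fractions, `1 / (x (l x - 1)) = 1 / (x - l⁻¹) - 1 / x`, reduce the integral to two
instances of `∫_A^B dx / ((x - c) √((x - A) (B - x))) = π / √((A - c) (B - c))` for `c < A < B`.
The substitution `u = 1 / (x - c)` turns that integrand into `1 / √(quadratic in u)`, which gives
the antiderivative `arccos (m x) / √((A - c) (B - c))`, where `m` is the Möbius map, affine in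
`1 / (x - c)`, sending `A, B` to `1, -1`. It is continuous on `[A, B]` with positive derivative
inside, so the fundamental theorem of calculus yields both integrability and the value `π`.
-/
open Real MeasureTheory Set

noncomputable def moebiusToUnit (A B c x : ℝ) : ℝ :=
  (2 * ((A - c) * (B - c)) / (x - c) - (A + B - 2 * c)) / (B - A)

section

variable {A B c : ℝ}

lemma moebiusToUnit_left (hcA : c < A) (hAB : A < B) : moebiusToUnit A B c A = 1 := by
  unfold moebiusToUnit
  have : A - c ≠ 0 := by linarith
  have : B - A ≠ 0 := by linarith
  field_simp
  ring

lemma moebiusToUnit_right (hcA : c < A) (hAB : A < B) : moebiusToUnit A B c B = -1 := by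
  unfold moebiusToUnit
  have : B - c ≠ 0 := by linarith
  have : B - A ≠ 0 := by linarith
  field_simp
  ring

lemma one_sub_moebiusToUnit_sq {x : ℝ} (hxc : x ≠ c) (hAB : A ≠ B) :
    1 - moebiusToUnit A B c x ^ 2 =
      4 * ((A - c) * (B - c)) * ((x - A) * (B - x)) / ((B - A) * (x - c)) ^ 2 := by
  unfold moebiusToUnit
  have : x - c ≠ 0 := sub_ne_zero.2 hxc
  have : B - A ≠ 0 := sub_ne_zero.2 hAB.symm
  field_simp
  ring

lemma hasDerivAt_moebiusToUnit {x : ℝ} (hxc : x ≠ c) :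
    HasDerivAt (moebiusToUnit A B c)
      (-(2 * ((A - c) * (B - c))) / ((B - A) * (x - c) ^ 2)) x := by
  have h := ((((hasDerivAt_const x (2 * ((A - c) * (B - c)))).div
    ((hasDerivAt_id' x).sub_const c) (sub_ne_zero.2 hxc)).sub_const (A + B - 2 * c)).div_const (B - A))
  refine h.congr_deriv ?_
  have : x - c ≠ 0 := sub_ne_zero.2 hxc
  field_simp
  ring

lemma hasDerivAt_arccos_moebiusToUnit (hcA : c < A) {x : ℝ} (hx : x ∈ Ioo A B) :
    HasDerivAt (fun y => arccos (moebiusToUnit A B c y) / √((A - c) * (B - c)))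
      (1 / ((x - c) * √((x - A) * (B - x)))) x := by
  obtain ⟨hAx, hxB⟩ := hx
  have hcx : c < x := by linarith
  have hxc : 0 < x - c := sub_pos.2 hcx
  have hK : 0 < (A - c) * (B - c) := mul_pos (by linarith) (by linarith)
  have hP : 0 < (x - A) * (B - x) := mul_pos (by linarith) (by linarith)
  have hsq := one_sub_moebiusToUnit_sq hcx.ne' (hAx.trans hxB).ne
  have hBA : 0 < B - A := by linarith
  have hpos : 0 < 1 - moebiusToUnit A B c x ^ 2 := by
    rw [hsq]
    positivity
  have hroot : √(1 - moebiusToUnit A B c x ^ 2) =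
      2 * √((A - c) * (B - c)) * √((x - A) * (B - x)) / ((B - A) * (x - c)) := by
    rw [hsq, ← sqrt_sq (by positivity :
      0 ≤ 2 * √((A - c) * (B - c)) * √((x - A) * (B - x)) / ((B - A) * (x - c)))]
    congr 1
    rw [div_pow, mul_pow, mul_pow, mul_pow, sq_sqrt hK.le, sq_sqrt hP.le]
    ring
  have hne_one : moebiusToUnit A B c x ≠ 1 := by
    rintro h; rw [h] at hpos; norm_num at hpos
  have hne_neg_one : moebiusToUnit A B c x ≠ -1 := by
    rintro h; rw [h] at hpos; norm_num at hpos
  refine ((hasDerivAt_arccos hne_neg_one hne_one).comp x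
    (hasDerivAt_moebiusToUnit hcx.ne') |>.div_const _).congr_deriv ?_
  rw [hroot]
  field_simp
  rw [sq_sqrt hK.le]

lemma continuousOn_moebiusToUnit : ContinuousOn (moebiusToUnit A B c) {c}ᶜ := by
  unfold moebiusToUnit
  refine ((continuousOn_const.div (continuousOn_id.sub continuousOn_const) ?_).sub
    continuousOn_const).div_const _
  exact fun _ hx => sub_ne_zero.2 hx

lemma continuousOn_arccos_moebiusToUnit (hcA : c < A) :
    ContinuousOn (fun y => arccos (moebiusToUnit A B c y) / √((A - c) * (B - c))) (Icc A B) :=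
  (continuous_arccos.comp_continuousOn (continuousOn_moebiusToUnit.mono
    fun _ hx => (hcA.trans_le hx.1).ne')).div_const _

lemma integrableOn_Ioc_one_div_mul_sqrt (hcA : c < A) :
    IntegrableOn (fun x => 1 / ((x - c) * √((x - A) * (B - x)))) (Ioc A B) :=
  intervalIntegral.integrableOn_deriv_of_nonneg (continuousOn_arccos_moebiusToUnit hcA)
    (fun _ hx => hasDerivAt_arccos_moebiusToUnit hcA hx)
    fun x hx => by
      have : 0 < x - c := by linarith [hx.1]
      positivity

lemma integral_Ioo_one_div_mul_sqrt (hcA : c < A) (hAB : A < B) :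
    ∫ x in Ioo A B, 1 / ((x - c) * √((x - A) * (B - x))) = π / √((A - c) * (B - c)) := by
  rw [← integral_Ioc_eq_integral_Ioo, ← intervalIntegral.integral_of_le hAB.le,
    intervalIntegral.integral_eq_sub_of_hasDerivAt_of_le hAB.le
      (continuousOn_arccos_moebiusToUnit hcA) (fun _ hx => hasDerivAt_arccos_moebiusToUnit hcA hx)
      ((intervalIntegrable_iff_integrableOn_Ioc_of_le hAB.le).2
        (integrableOn_Ioc_one_div_mul_sqrt hcA)),
    moebiusToUnit_left hcA hAB, moebiusToUnit_right hcA hAB, arccos_one, arccos_neg_one]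
  ring

end

lemma one_div_mul_mul_sub_one {l x : ℝ} (hl : l ≠ 0) (hx : x ≠ 0) (hlx : l * x - 1 ≠ 0) (s : ℝ) :
    1 / (x * (l * x - 1) * s) = 1 / ((x - l⁻¹) * s) - 1 / (x * s) := by
  have : x - l⁻¹ ≠ 0 := by
    rw [sub_ne_zero]; rintro rfl; simp [hl] at hlx
  rcases eq_or_ne s 0 with rfl | hs
  · simp
  rw [div_sub_div _ _ (mul_ne_zero this hs) (mul_ne_zero hx hs)]
  field_simp
  ring

theorem stmt_9 (l ν : ℝ) (hl : 1 < l) (hν : ν ∈ Set.Ioo (1 / Real.sqrt l) 1) :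
    ν * Real.sqrt (l - 1) *
        ∫ x in Set.Ioo (ν ^ 2) 1,
          1 / (x * (l * x - 1) * Real.sqrt ((x - ν ^ 2) * (1 - x))) =
      Real.pi * (-Real.sqrt (l - 1) + l * ν / Real.sqrt (l * ν ^ 2 - 1)) := by
  obtain ⟨hν_gt, hν_lt⟩ := hν
  have hl0 : 0 < l := by linarith
  have hν0 : 0 < ν := lt_of_le_of_lt (by positivity) hν_gt
  have hν_sqrt : 1 < ν * √l := (div_lt_iff₀ (sqrt_pos.2 hl0)).1 hν_gt
  have hlν : 0 < l * ν ^ 2 - 1 := by nlinarith [sq_sqrt hl0.le]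
  have hν2 : ν ^ 2 < 1 := by nlinarith
  have hinv : l⁻¹ < ν ^ 2 := by rw [inv_lt_iff_one_lt_mul₀ hl0]; linarith
  have hsplit : ∫ x in Ioo (ν ^ 2) 1, 1 / (x * (l * x - 1) * √((x - ν ^ 2) * (1 - x))) =
      ∫ x in Ioo (ν ^ 2) 1, (1 / ((x - l⁻¹) * √((x - ν ^ 2) * (1 - x))) -
        1 / ((x - 0) * √((x - ν ^ 2) * (1 - x)))) := by
    refine setIntegral_congr_fun measurableSet_Ioo fun x hx => ?_
    have hx0 : 0 < x := by nlinarith [hx.1]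
    have : 0 < l * x - 1 := by nlinarith [hx.1]
    rw [sub_zero, one_div_mul_mul_sub_one hl0.ne' hx0.ne' this.ne']
  rw [hsplit, integral_sub ((integrableOn_Ioc_one_div_mul_sqrt hinv).mono_set Ioo_subset_Ioc_self)
      ((integrableOn_Ioc_one_div_mul_sqrt (by positivity)).mono_set Ioo_subset_Ioc_self),
    integral_Ioo_one_div_mul_sqrt hinv hν2, integral_Ioo_one_div_mul_sqrt (by positivity) hν2,
    sub_zero, sub_zero, mul_one, sqrt_sq hν0.le]
  have hroot : √((ν ^ 2 - l⁻¹) * (1 - l⁻¹)) = √(l * ν ^ 2 - 1) * √(l - 1) / l := by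
    rw [← sqrt_mul hlν.le, ← sqrt_sq hl0.le, ← sqrt_div' _ (sq_nonneg l), sqrt_sq hl0.le]
    congr 1
    field_simp
  rw [hroot]
  have : 0 < √(l * ν ^ 2 - 1) := sqrt_pos.2 hlν
  have : 0 < √(l - 1) := sqrt_pos.2 (by linarith)
  field_simp
  ring
end
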